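/- The join of two std-good congruences on (ℕ⁺)* is a std-good congruence: if ~ and ≈ are std-good congruences, then the smallest monoid congruence containing both ~ and ≈ (the transitive closure of their union) is a std-congruence and is compatible with restriction to alphabet intervals. -/

import Mathlib

open scoped Classical

/-- Words over the positive integers. -/
abbrev Word : Type := List ℕ+

/-- Evaluation of a word: number of occurrences of each letter. -/
def ev (w : Word) : ℕ+ → ℕ := fun a => w.count a

/-- A monoid congruence on the free monoid `(ℕ⁺)*`. -/
def IsCongruence (r : Word → Word → Prop) : Prop :=
  Equivalence r ∧ ∀ u v u' v', r u v → r u' v' → r (u ++ u') (v ++ v')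

/-- Restriction of a word to the letters belonging to a set `I`. -/
noncomputable def restrictTo (I : Set ℕ+) (w : Word) : Word :=
  w.filter fun a => decide (a ∈ I)

/-- `I` is an interval (order-convex subset) of `ℕ⁺`. -/
def IsIntervalSet (I : Set ℕ+) : Prop :=
  ∀ ⦃a b c : ℕ+⦄, a ∈ I → c ∈ I → a ≤ b → b ≤ c → b ∈ I

/-- Compatibility with restriction to alphabet intervals. -/
def CompatRestrict (r : Word → Word → Prop) : Prop :=
  ∀ I : Set ℕ+, IsIntervalSet I → ∀ u v, r u v → r (restrictTo I u) (restrictTo I v)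

/-- `r` is a `φ`-congruence. -/
def IsPhiCongruence (φ : Word → Word) (r : Word → Word → Prop) : Prop :=
  ∀ u v, r u v ↔ (r (φ u) (φ v) ∧ ev u = ev v)

/-- Standardization. -/
def std (w : Word) : Word :=
  (List.range w.length).map fun i =>
    ⟨((List.range w.length).countP fun j =>
        decide (w.getD j 1 < w.getD i 1 ∨ (w.getD j 1 = w.getD i 1 ∧ j < i))) + 1,
      Nat.succ_pos _⟩

/-- Packing. -/
def pack (w : Word) : Word :=
  w.map fun a => ⟨(w.dedup.countP fun b => decide (b < a)) + 1, Nat.succ_pos _⟩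

theorem parkBad_ex (w : Word) :
    ∃ d : ℕ, 1 ≤ d ∧ (w.countP fun a : ℕ+ => decide ((a : ℕ) ≤ d)) < d :=
  ⟨w.length + 1, Nat.succ_le_succ (Nat.zero_le _), by
    have h : (w.countP fun a : ℕ+ => decide ((a : ℕ) ≤ w.length + 1)) ≤ w.length :=
      List.countP_le_length
    omega⟩

/-- The smallest `d ≥ 1` such that fewer than `d` letters of `w` are `≤ d`. -/
noncomputable def parkBad (w : Word) : ℕ := Nat.find (parkBad_ex w)

/-- One pass of the parkization procedure, with fuel. -/
noncomputable def parkAux : ℕ → Word → Word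
  | 0, w => w
  | f + 1, w =>
    if parkBad w ≤ w.length then
      parkAux f (w.map fun a : ℕ+ => if parkBad w < (a : ℕ) then (a - 1 : ℕ+) else a)
    else w

/-- Parkization. The fuel `(sum of the letters)` always suffices,
since every pass strictly decreases the sum of the letters. -/
noncomputable def park (w : Word) : Word := parkAux (w.map fun a => (a : ℕ)).sum w

/-- Smallest monoid congruence containing `base`. -/
def CongClosure (base : Word → Word → Prop) (u v : Word) : Prop :=
  ∀ r : Word → Word → Prop, IsCongruence r → (∀ x y, base x y → r x y) → r u v

def sylvBase (x y : Word) : Prop :=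
  ∃ (a b c : ℕ+) (v : Word), a ≤ b ∧ b < c ∧
    x = a :: c :: (v ++ [b]) ∧ y = c :: a :: (v ++ [b])

/-- The sylvester congruence. -/
def sylv : Word → Word → Prop := CongClosure sylvBase

def stalBase (x y : Word) : Prop :=
  ∃ (a b : ℕ+) (v : Word), x = b :: a :: (v ++ [b]) ∧ y = a :: b :: (v ++ [b])

/-- The stalactic congruence. -/
def stal : Word → Word → Prop := CongClosure stalBase

def sylvSharpBase (x y : Word) : Prop :=
  ∃ (a b c : ℕ+) (v : Word), a < b ∧ b ≤ c ∧
    x = b :: (v ++ [a, c]) ∧ y = b :: (v ++ [c, a])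

/-- The #-sylvester congruence. -/
def sylvSharp : Word → Word → Prop := CongClosure sylvSharpBase

/-- The taïga congruence: join of the sylvester and stalactic congruences. -/
def taiga : Word → Word → Prop := CongClosure fun u v => sylv u v ∨ stal u v

/-- Planar binary trees with letter labels. -/
inductive BT : Type where
  | leaf : BT
  | node : BT → ℕ+ → BT → BT
deriving DecidableEq

/-- Binary search tree insertion of a letter. -/
def BT.insert : BT → ℕ+ → BT
  | .leaf, l => .node .leaf l .leaf
  | .node L b R, l => if l ≤ b then .node (L.insert l) b R else .node L b (R.insert l)

/-- Binary search tree of a word: insert the letters from right to left. -/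
def bst (w : Word) : BT := w.foldr (fun l t => t.insert l) .leaf

/-- Planar binary trees labelled by a letter and a multiplicity. -/
inductive BSTM : Type where
  | leaf : BSTM
  | node : BSTM → ℕ+ → ℕ+ → BSTM → BSTM   -- left, letter, multiplicity, right
deriving DecidableEq

/-- Insertion of a letter into a binary search tree with multiplicities. -/
def BSTM.insert : BSTM → ℕ+ → BSTM
  | .leaf, l => .node .leaf l 1 .leaf
  | .node L l' k R, l =>
    if l = l' then .node L l' (k + 1) R
    else if l < l' then .node (L.insert l) l' k R
    else .node L l' k (R.insert l)

/-- The `P`-symbol: insert the letters of `w` from right to left. -/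
def Pmap (w : Word) : BSTM := w.foldr (fun l t => t.insert l) .leaf

/-- Letters of a BSTM in left-to-right (infix) order. -/
def BSTM.letters : BSTM → List ℕ+
  | .leaf => []
  | .node L l _ R => L.letters ++ l :: R.letters

/-- The binary search tree property for a BSTM. -/
def BSTM.IsSearchTree : BSTM → Prop
  | .leaf => True
  | .node L l _ R =>
      (∀ x ∈ L.letters, x < l) ∧ (∀ x ∈ R.letters, l < x) ∧
        L.IsSearchTree ∧ R.IsSearchTree

/-- Total multiplicity of a letter in a BSTM. -/
def BSTM.mult : BSTM → ℕ+ → ℕ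
  | .leaf, _ => 0
  | .node L l k R, a => L.mult a + (if a = l then (k : ℕ) else 0) + R.mult a

/-- Size of a BSTM: sum of the multiplicities. -/
def BSTM.size : BSTM → ℕ
  | .leaf => 0
  | .node L _ k R => L.size + (k : ℕ) + R.size

/-- Planar binary trees with multiplicities. -/
inductive BTM : Type where
  | leaf : BTM
  | node : BTM → ℕ+ → BTM → BTM
deriving DecidableEq

/-- Size of a BTM: sum of the multiplicities. -/
def BTM.size : BTM → ℕ
  | .leaf => 0
  | .node L k R => L.size + (k : ℕ) + R.size

/-- Number of nodes of a BTM. -/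
def BTM.numNodes : BTM → ℕ
  | .leaf => 0
  | .node L _ R => L.numNodes + 1 + R.numNodes

/-- Forgetting the letters of a BSTM gives a BTM. -/
def forgetLetters : BSTM → BTM
  | .leaf => .leaf
  | .node L _ k R => .node (forgetLetters L) k (forgetLetters R)

/-- The `B`-symbol: the BTM underlying `P(w)`. -/
def Bmap (w : Word) : BTM := forgetLetters (Pmap w)

/-- A packed word: its set of letters is `{1, …, k}` for some `k`. -/
def IsPacked (w : Word) : Prop := ∀ a ∈ w, ∀ b : ℕ+, b ≤ a → b ∈ w

/-- Number of packed words inserting to the BTM `T`. -/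
noncomputable def fT (T : BTM) : ℕ :=
  Set.ncard {w : Word | IsPacked w ∧ Bmap w = T}

/-- The hook-type product over the subtrees of a BTM. -/
def hookProd : BTM → ℕ
  | .leaf => 1
  | .node L k R =>
      (BTM.node L k R).size * ((k : ℕ) - 1).factorial * hookProd L * hookProd R

/-- Label the nodes of a BTM in infix order starting from a given letter;
returns the labelled tree and the next unused letter. -/
def infixLabelAux : BTM → ℕ+ → BSTM × ℕ+
  | .leaf, n => (.leaf, n)
  | .node L k R, n =>
    let p := infixLabelAux L n
    let q := infixLabelAux R (p.2 + 1)
    (.node p.1 p.2 k q.1, q.2)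

/-- Label the nodes of a BTM by `1, …, k` in infix order. -/
def infixLabel (T : BTM) : BSTM := (infixLabelAux T 1).1

/-!
The join `J` of `r` and `s` is the reflexive-transitive closure of `r ∪ s`, so it inherits
compatibility with restriction and `u J v` implies `std u J std v`. For the converse, if `r` (say)
relates `12` and `21` then, being a std-congruence, it relates any two words with the same
evaluation. Otherwise no step of a chain of permutations from `std u` to `std v` can exchange two
consecutive letters `c`, `c + 1` (restrict the step to `{c, c + 1}` and standardize). Hence along
the chain `c` stays before `c + 1` whenever the `c`-th and `(c+1)`-th smallest letters of `u`
coincide, which is exactly what is needed for each permutation `σ` of the chain to be the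
standardization of the word `σ.map (dstd u)`, obtained by replacing each `k` with the `k`-th
smallest letter of `u`. The std-congruence property then lifts every step, giving a chain from
`u` to `v`.
-/

open Relation

lemma List.countP_lt_countP {α : Type*} {p q : α → Bool} {l : List α}
    (hpq : ∀ x, p x → q x) {a : α} (ha : a ∈ l) (hpa : p a = false) (hqa : q a = true) :
    l.countP p < l.countP q := by
  simp only [List.countP_eq_length_filter]
  have hsub := List.monotone_filter_right l hpq
  refine lt_of_le_of_ne hsub.length_le fun hlen => ?_
  have hmem : a ∈ l.filter q := List.mem_filter.2 ⟨ha, hqa⟩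
  rw [← hsub.eq_of_length_le hlen.ge] at hmem
  simp [hpa] at hmem

lemma List.countP_range_getD {α : Type*} (l : List α) (d : α) (p : α → Bool) :
    (List.range l.length).countP (fun j => p (l.getD j d)) = l.countP p := by
  have h : (List.range l.length).map (l.getD · d) = l :=
    List.ext_getElem (by simp) fun i _ hi => by simp [List.getElem?_eq_getElem hi]
  conv_rhs => rw [← h]
  rw [List.countP_map]
  rfl

lemma List.Pairwise.getD_eq_of_countP_le_of_lt_countP {α : Type*} [LinearOrder α] {s : List α}
    (hs : s.Pairwise (· ≤ ·)) {k : ℕ} {x d : α} (hlt : s.countP (· < x) ≤ k)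
    (hle : k < s.countP (· ≤ x)) : s.getD k d = x := by
  induction s generalizing k with
  | nil => simp at hle
  | cons h t ih =>
    rw [List.pairwise_cons] at hs
    have hlt_t : ¬ h < x → t.countP (· < x) = 0 := fun hx =>
      List.countP_eq_zero.2 fun y hy => by simpa using (not_lt.1 hx).trans (hs.1 y hy)
    rcases k with _ | k
    · rw [List.getD_cons_zero]
      refine le_antisymm ?_ (not_lt.1 fun hx => by simp [hx] at hlt)
      obtain ⟨y, hy, hyx⟩ := List.countP_pos_iff.1 hle
      rcases List.mem_cons.1 hy with rfl | hy
      · simpa using hyx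
      · exact (hs.1 y hy).trans (by simpa using hyx)
    · rw [List.getD_cons_succ]
      refine ih hs.2 ?_ ?_
      · by_cases hx : h < x
        · simp only [List.countP_cons, hx, decide_true, if_true] at hlt
          omega
        · rw [hlt_t hx]
          exact Nat.zero_le _
      · simp only [List.countP_cons] at hle
        split_ifs at hle <;> omega

lemma List.idxOf_lt_idxOf_of_pair_sublist {α : Type*} [DecidableEq α] {l : List α}
    (hl : l.Nodup) {x y : α} (h : [x, y].Sublist l) : l.idxOf x < l.idxOf y := by
  obtain ⟨l₁, l₂, rfl, hx, hy⟩ := List.cons_sublist_iff.1 h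
  have hy₂ : y ∈ l₂ := hy.subset (List.mem_singleton_self y)
  have hy₁ : y ∉ l₁ := fun hy₁ => (List.nodup_append.1 hl).2.2 y hy₁ y hy₂ rfl
  rw [List.idxOf_append, List.idxOf_append, if_pos hx, if_neg hy₁]
  exact (List.idxOf_lt_length_of_mem hx).trans_le (Nat.le_add_left _ _)

lemma ev_eq_iff_perm {u v : Word} : ev u = ev v ↔ u.Perm v := by
  rw [List.perm_iff_count, funext_iff]
  rfl

lemma restrictTo_append (I : Set ℕ+) (u v : Word) :
    restrictTo I (u ++ v) = restrictTo I u ++ restrictTo I v :=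
  List.filter_append ..

lemma IsCongruence.comap {ρ : Word → Word → Prop} (hρ : IsCongruence ρ) {f : Word → Word}
    (hf : ∀ u v, f (u ++ v) = f u ++ f v) : IsCongruence fun u v => ρ (f u) (f v) :=
  ⟨⟨fun _ => hρ.1.refl _, hρ.1.symm, hρ.1.trans⟩,
    fun u v u' v' h h' => by simpa only [hf] using hρ.2 _ _ _ _ h h'⟩

lemma isCongruence_reflTransGen {R : Word → Word → Prop} (hsymm : ∀ a b, R a b → R b a)
    (hleft : ∀ a b c, R a b → R (c ++ a) (c ++ b))
    (hright : ∀ a b c, R a b → R (a ++ c) (b ++ c)) :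
    IsCongruence (ReflTransGen R) := by
  refine ⟨⟨fun _ => .refl, fun h => .mono (fun a b => hsymm b a) _ _ (.swap _ _ h), .trans⟩,
    ?_⟩
  intro u v u' v' h h'
  exact (ReflTransGen.lift (· ++ u') (fun a b => hright a b u') _ _ h).trans
    (ReflTransGen.lift (v ++ ·) (fun a b => hleft a b v) _ _ h')

namespace CongClosure

variable {base : Word → Word → Prop}

lemma of_base {u v : Word} (h : base u v) : CongClosure base u v :=
  fun _ _ hbase => hbase u v h

variable (base) in
lemma isCongruence : IsCongruence (CongClosure base) :=
  ⟨⟨fun u _ hρ _ => hρ.1.refl u, fun h ρ hρ hbase => hρ.1.symm (h ρ hρ hbase),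
    fun h h' ρ hρ hbase => hρ.1.trans (h ρ hρ hbase) (h' ρ hρ hbase)⟩,
    fun _ _ _ _ h h' ρ hρ hbase => hρ.2 _ _ _ _ (h ρ hρ hbase) (h' ρ hρ hbase)⟩

lemma compatRestrict (h : CompatRestrict base) : CompatRestrict (CongClosure base) :=
  fun I hI _ _ huv => huv _ ((isCongruence base).comap (restrictTo_append I))
    fun x y hxy => of_base (h I hI x y hxy)

end CongClosure

lemma congClosure_or_iff_reflTransGen {r s : Word → Word → Prop} (hr : IsCongruence r)
    (hs : IsCongruence s) {u v : Word} :
    CongClosure (fun x y => r x y ∨ s x y) u v ↔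
      ReflTransGen (fun x y => r x y ∨ s x y) u v := by
  constructor
  · refine fun h => h _ (isCongruence_reflTransGen ?_ ?_ ?_) fun _ _ h => .single h
    · exact fun a b => Or.imp hr.1.symm hs.1.symm
    · exact fun a b c => Or.imp (hr.2 _ _ _ _ (hr.1.refl c)) (hs.2 _ _ _ _ (hs.1.refl c))
    · exact fun a b c => Or.imp (hr.2 _ _ _ _ · (hr.1.refl c)) (hs.2 _ _ _ _ · (hs.1.refl c))
  · intro h
    induction h with
    | refl => exact (CongClosure.isCongruence _).1.refl u
    | tail _ hstep ih => exact (CongClosure.isCongruence _).1.trans ih (.of_base hstep)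

lemma isCongruence_perm : IsCongruence fun u v : Word => u.Perm v :=
  ⟨⟨List.Perm.refl, List.Perm.symm, List.Perm.trans⟩, fun _ _ _ _ => List.Perm.append⟩

def stdKey (w : Word) (i : ℕ) : ℕ+ ×ₗ ℕ := toLex (w.getD i 1, i)

def stdRank (w : Word) (i : ℕ) : ℕ :=
  (List.range w.length).countP fun j =>
    decide (w.getD j 1 < w.getD i 1 ∨ (w.getD j 1 = w.getD i 1 ∧ j < i))

lemma std_eq_map_stdRank (w : Word) :
    std w = (List.range w.length).map fun i => (stdRank w i).succPNat := rfl

lemma stdRank_eq_countP_stdKey_lt (w : Word) (i : ℕ) :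
    stdRank w i = (List.range w.length).countP fun j => stdKey w j < stdKey w i := by
  simp only [stdRank, stdKey, Prod.Lex.toLex_lt_toLex]

lemma std_length (w : Word) : (std w).length = w.length := by
  simp [std_eq_map_stdRank]

lemma std_getElem {w : Word} {i : ℕ} (hi : i < (std w).length) :
    (std w)[i] = (stdRank w i).succPNat := by
  simp [std_eq_map_stdRank]

lemma stdKey_injective (w : Word) : Function.Injective (stdKey w) :=
  fun _ _ h => congrArg (fun k => (ofLex k).2) h

lemma stdRank_lt_stdRank {w : Word} {i j : ℕ} (hi : i < w.length)
    (h : stdKey w i < stdKey w j) : stdRank w i < stdRank w j := by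
  simp only [stdRank_eq_countP_stdKey_lt]
  exact List.countP_lt_countP (fun k hk => by simpa using (of_decide_eq_true hk).trans h)
    (List.mem_range.2 hi) (by simp) (by simpa using h)

lemma stdRank_lt_length {w : Word} {i : ℕ} (hi : i < w.length) : stdRank w i < w.length := by
  simpa [stdRank_eq_countP_stdKey_lt] using
    List.countP_lt_countP (q := fun _ => true) (fun _ _ => rfl) (List.mem_range.2 hi)
      (by simp) rfl

lemma eq_of_stdRank_eq {w : Word} {i j : ℕ} (hi : i < w.length) (hj : j < w.length)
    (h : stdRank w i = stdRank w j) : i = j := by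
  rcases lt_trichotomy (stdKey w i) (stdKey w j) with hij | hij | hij
  · exact absurd h (stdRank_lt_stdRank hi hij).ne
  · exact stdKey_injective w hij
  · exact absurd h (stdRank_lt_stdRank hj hij).ne'

def IsPermWord (w : Word) : Prop := w.Nodup ∧ ∀ a : ℕ+, a ∈ w ↔ (a : ℕ) ≤ w.length

lemma IsPermWord.perm {w w' : Word} (hw : IsPermWord w) (h : w.Perm w') : IsPermWord w' :=
  ⟨h.nodup_iff.1 hw.1, fun a => by rw [← h.mem_iff, ← h.length_eq]; exact hw.2 a⟩

lemma isPermWord_of_nodup {w : Word} (hw : w.Nodup) (hle : ∀ a ∈ w, (a : ℕ) ≤ w.length) :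
    IsPermWord w := by
  have hlt : ∀ a : ℕ+, a < w.length.succPNat ↔ (a : ℕ) ≤ w.length := fun a => by
    rw [← PNat.coe_lt_coe, Nat.succPNat_coe, Nat.lt_succ_iff]
  have hsub : w.toFinset ⊆ Finset.Iio w.length.succPNat := fun a ha => by
    simpa [hlt] using hle a (List.mem_toFinset.1 ha)
  have heq := Finset.eq_of_subset_of_card_le hsub
    (by rw [← Finset.Ico_bot]; simp [List.toFinset_card_of_nodup hw])
  refine ⟨hw, fun a => ⟨hle a, fun ha => ?_⟩⟩
  rw [← List.mem_toFinset, heq, Finset.mem_Iio, hlt]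
  exact ha

lemma IsPermWord.countP_lt {w : Word} (hw : IsPermWord w) {x : ℕ+} (hx : x ∈ w) :
    w.countP (· < x) = x - 1 := by
  have hfilter : (w.filter (· < x)).toFinset = Finset.Iio x := by
    ext y
    simp only [List.toFinset_filter, Finset.mem_filter, List.mem_toFinset, decide_eq_true_eq,
      Finset.mem_Iio, and_iff_right_iff_imp]
    exact fun hy => (hw.2 y).2 (((hw.2 x).1 hx).trans' (PNat.coe_le_coe _ _ |>.2 hy.le))
  rw [List.countP_eq_length_filter, ← List.toFinset_card_of_nodup (hw.1.filter _), hfilter,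
    ← Finset.Ico_bot]
  simp

lemma isPermWord_std (w : Word) : IsPermWord (std w) := by
  refine isPermWord_of_nodup ?_ fun a ha => ?_
  · rw [std_eq_map_stdRank]
    refine List.nodup_range.map_on fun i hi j hj h => ?_
    exact eq_of_stdRank_eq (List.mem_range.1 hi) (List.mem_range.1 hj) (Nat.succPNat_inj.1 h)
  · rw [std_eq_map_stdRank, List.mem_map] at ha
    obtain ⟨i, hi, rfl⟩ := ha
    simpa [std_length] using stdRank_lt_length (List.mem_range.1 hi)

lemma std_eq_of_stdKey_lt_iff {v σ : Word} (hσ : IsPermWord σ) (hlen : σ.length = v.length)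
    (h : ∀ i j, i < v.length → j < v.length →
      (stdKey v j < stdKey v i ↔ σ.getD j 1 < σ.getD i 1)) :
    std v = σ := by
  refine List.ext_getElem (by rw [std_length, hlen]) fun i hi hiσ => ?_
  have hiv : i < v.length := hlen ▸ hiσ
  have hrank : stdRank v i = σ.countP (· < σ[i]) := by
    rw [stdRank_eq_countP_stdKey_lt, ← List.getD_eq_getElem σ 1 hiσ,
      ← List.countP_range_getD σ 1, hlen]
    exact List.countP_congr fun j hj => by simp [h i j hiv (List.mem_range.1 hj)]
  rw [std_getElem, hrank, hσ.countP_lt (List.getElem_mem hiσ)]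
  exact PNat.succPNat_natPred σ[i]

lemma std_pair_of_lt {x y : ℕ+} (h : x < y) : std [x, y] = [1, 2] := by
  simp [std_eq_map_stdRank, stdRank, List.range_succ, h, h.ne, h.not_gt]
  exact ⟨rfl, rfl⟩

lemma std_pair_of_gt {x y : ℕ+} (h : x < y) : std [y, x] = [2, 1] := by
  simp [std_eq_map_stdRank, stdRank, List.range_succ, h, h.ne', h.not_gt]
  exact ⟨rfl, rfl⟩

lemma std_getElem_lt_of_eq {u : Word} {i j : ℕ} (hij : i < j) (hj : j < u.length)
    (h : u[i] = u[j]) :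
    (std u)[i]'(by rw [std_length]; omega) < (std u)[j]'(by rwa [std_length]) := by
  rw [std_getElem, std_getElem, Nat.succPNat_lt_succPNat]
  refine stdRank_lt_stdRank (by omega) (Prod.Lex.toLex_lt_toLex.2 (Or.inr ⟨?_, hij⟩))
  change u.getD i 1 = u.getD j 1
  rw [List.getD_eq_getElem _ _ (hij.trans hj), List.getD_eq_getElem _ _ hj, h]

/-- The `k`-th smallest letter of `u`; junk `1` for `k > |u|`. -/
def dstd (u : Word) (k : ℕ+) : ℕ+ := (u.insertionSort (· ≤ ·)).getD (k - 1) 1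

lemma dstd_eq_of_perm {u v : Word} (h : u.Perm v) : dstd u = dstd v := by
  funext k
  rw [dstd, dstd, List.Perm.eq_of_pairwise' (List.pairwise_insertionSort _ u)
    (List.pairwise_insertionSort _ v)
    (((List.perm_insertionSort _ u).trans h).trans (List.perm_insertionSort _ v).symm)]

lemma dstd_le_dstd {u : Word} {x y : ℕ+} (hxy : x ≤ y) (hy : (y : ℕ) ≤ u.length) :
    dstd u x ≤ dstd u y := by
  have hsorted := List.pairwise_insertionSort (· ≤ ·) u
  have hlen := (List.perm_insertionSort (· ≤ ·) u).length_eq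
  have hx : (x : ℕ) ≤ y := hxy
  have := x.pos
  rw [dstd, dstd, List.getD_eq_getElem _ _ (by omega), List.getD_eq_getElem _ _ (by omega)]
  rcases (Nat.sub_le_sub_right hx 1).eq_or_lt with h | h
  · simp only [h, le_refl]
  · exact List.pairwise_iff_getElem.1 hsorted _ _ _ _ h

lemma dstd_std_getElem (u : Word) (i : ℕ) (hi : i < (std u).length) :
    dstd u (std u)[i] = u[i]'(std_length u ▸ hi) := by
  have hiu : i < u.length := std_length u ▸ hi
  have hperm := List.perm_insertionSort (· ≤ ·) u
  rw [std_getElem, dstd, Nat.succPNat_coe, Nat.succ_sub_one]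
  refine (List.pairwise_insertionSort _ u).getD_eq_of_countP_le_of_lt_countP ?_ ?_
  · rw [hperm.countP_eq, ← List.getD_eq_getElem u 1 hiu, ← List.countP_range_getD u 1,
      stdRank_eq_countP_stdKey_lt]
    exact List.countP_mono_left fun j _ hj => by
      simpa [stdKey, Prod.Lex.toLex_lt_toLex] using Or.inl (of_decide_eq_true hj)
  · rw [hperm.countP_eq, ← List.getD_eq_getElem u 1 hiu, ← List.countP_range_getD u 1]
    refine List.countP_lt_countP (fun j hj => ?_) (List.mem_range.2 hiu) (by simp) (by simp)
    simp only [decide_eq_true_eq] at hj ⊢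
    rcases hj with hj | hj
    · exact hj.le
    · exact hj.1.le

lemma map_dstd_std (u : Word) : (std u).map (dstd u) = u :=
  List.ext_getElem (by simp [std_length]) fun i hi _ => by
    rw [List.getElem_map, dstd_std_getElem]

lemma std_map_eq_self {w : Word} (hw : IsPermWord w) {g : ℕ+ → ℕ+}
    (hg : ∀ x ∈ w, ∀ y ∈ w, x ≤ y → g x ≤ g y)
    (hfiber : ∀ x ∈ w, ∀ y ∈ w, x < y → g x = g y → w.idxOf x < w.idxOf y) :
    std (w.map g) = w := by
  refine std_eq_of_stdKey_lt_iff hw (List.length_map _).symm fun i j hi hj => ?_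
  rw [List.length_map] at hi hj
  have hidx : ∀ k (hk : k < w.length), w.idxOf w[k] = k := hw.1.idxOf_getElem
  have hmi := List.getElem_mem hi
  have hmj := List.getElem_mem hj
  have hgetD : ∀ k (hk : k < w.length), (w.map g).getD k 1 = g w[k] := fun k hk => by
    rw [List.getD_eq_getElem _ _ (by simpa using hk), List.getElem_map]
  simp only [stdKey, Prod.Lex.toLex_lt_toLex, hgetD i hi, hgetD j hj,
    List.getD_eq_getElem _ _ hi, List.getD_eq_getElem _ _ hj]
  constructor
  · rintro (hlt | ⟨heq, hji⟩)
    · exact lt_of_not_ge fun hle => hlt.not_ge (hg _ hmi _ hmj hle)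
    · rcases lt_trichotomy w[j] w[i] with hlt | heq' | hgt
      · exact hlt
      · exact absurd (hw.1.getElem_inj_iff.1 heq') hji.ne
      · have := hfiber _ hmi _ hmj hgt heq.symm
        rw [hidx i hi, hidx j hj] at this
        exact absurd this hji.not_gt
  · intro hlt
    refine (hg _ hmj _ hmi hlt.le).lt_or_eq.imp_right fun heq => ⟨heq, ?_⟩
    simpa only [hidx i hi, hidx j hj] using hfiber _ hmj _ hmi hlt heq

lemma isIntervalSet_Icc (a b : ℕ+) : IsIntervalSet (Set.Icc a b) :=
  fun _ _ _ ha hc hab hbc => ⟨ha.1.trans hab, hbc.trans hc.2⟩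

lemma mem_Icc_add_one_iff {c x : ℕ+} : x ∈ Set.Icc c (c + 1) ↔ x = c ∨ x = c + 1 := by
  simp only [Set.mem_Icc, ← PNat.coe_le_coe, PNat.add_coe, PNat.one_coe, ← PNat.coe_inj]
  omega

lemma IsPermWord.restrictTo_Icc_perm {w : Word} (hw : IsPermWord w) {c : ℕ+}
    (hc : (c : ℕ) + 1 ≤ w.length) : (restrictTo (Set.Icc c (c + 1)) w).Perm [c, c + 1] := by
  have hcc : c ≠ c + 1 := (PNat.lt_add_right c 1).ne
  refine (List.perm_ext_iff_of_nodup (hw.1.filter _) (by simpa using hcc)).2 fun a => ?_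
  simp only [List.mem_filter, decide_eq_true_eq, mem_Icc_add_one_iff, List.mem_cons,
    List.not_mem_nil, or_false, and_iff_right_iff_imp]
  rintro (rfl | rfl)
  · exact (hw.2 _).2 (by omega)
  · exact (hw.2 _).2 (by rwa [PNat.add_coe, PNat.one_coe])

def RespectsTies (u w : Word) : Prop :=
  ∀ c : ℕ+, (c : ℕ) + 1 ≤ u.length → dstd u c = dstd u (c + 1) →
    restrictTo (Set.Icc c (c + 1)) w = [c, c + 1]

lemma respectsTies_std (u : Word) : RespectsTies u (std u) := by
  intro c hc hd
  have hw := isPermWord_std u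
  refine (List.perm_pair.1 (hw.restrictTo_Icc_perm (by rwa [std_length]))).resolve_right
    fun h => ?_
  have hsub : [c + 1, c].Sublist (std u) := h ▸ List.filter_sublist
  have hlt := List.idxOf_lt_idxOf_of_pair_sublist hw.1 hsub
  have hj := List.idxOf_lt_length_of_mem (hsub.subset (by simp : c ∈ [c + 1, c]))
  have hi := hlt.trans hj
  have hletters : u[(std u).idxOf (c + 1)]'(std_length u ▸ hi) =
      u[(std u).idxOf c]'(std_length u ▸ hj) := by
    rw [← dstd_std_getElem u _ hi, ← dstd_std_getElem u _ hj, List.getElem_idxOf,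
      List.getElem_idxOf, hd]
  have := std_getElem_lt_of_eq hlt (std_length u ▸ hj) hletters
  simp only [List.getElem_idxOf] at this
  exact this.not_ge (PNat.lt_add_right c 1).le

lemma std_map_dstd {u w : Word} (hw : w.Perm (std u)) (hties : RespectsTies u w) :
    std (w.map (dstd u)) = w := by
  have hwp : IsPermWord w := (isPermWord_std u).perm hw.symm
  have hlen : w.length = u.length := hw.length_eq.trans (std_length u)
  have hle : ∀ x ∈ w, (x : ℕ) ≤ u.length := fun x hx => hlen ▸ (hwp.2 x).1 hx
  refine std_map_eq_self hwp (fun x _ y hy hxy => dstd_le_dstd hxy (hle y hy)) ?_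
  intro x hx y hy hxy hd
  refine strictMonoOn_of_lt_succ Set.ordConnected_Icc (f := (w.idxOf ·)) ?_
    ⟨le_rfl, hxy.le⟩ ⟨hxy.le, le_rfl⟩ hxy
  intro c _ hc hc1
  rw [PNat.succ_eq_add_one] at hc1 ⊢
  have hcy : (c : ℕ) + 1 ≤ u.length := by
    have := hle y hy
    have : ((c + 1 : ℕ+) : ℕ) ≤ y := hc1.2
    simp only [PNat.add_coe, PNat.one_coe] at this
    omega
  have hdc : dstd u c = dstd u (c + 1) := by
    refine le_antisymm (dstd_le_dstd (PNat.lt_add_right c 1).le hcy) ?_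
    calc dstd u (c + 1) ≤ dstd u y := dstd_le_dstd hc1.2 (hle y hy)
      _ = dstd u x := hd.symm
      _ ≤ dstd u c := dstd_le_dstd hc.1 (by omega)
  exact List.idxOf_lt_idxOf_of_pair_sublist hwp.1 (hties c hcy hdc ▸ List.filter_sublist)

lemma IsPhiCongruence.perm_of_rel {ρ : Word → Word → Prop} (hφ : IsPhiCongruence std ρ)
    {a b : Word} (h : ρ a b) : a.Perm b :=
  ev_eq_iff_perm.1 ((hφ a b).1 h).2

lemma IsPhiCongruence.rel_of_std {ρ : Word → Word → Prop} (hφ : IsPhiCongruence std ρ)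
    {a b : Word} (h : ρ (std a) (std b)) (hab : a.Perm b) : ρ a b :=
  (hφ a b).2 ⟨h, ev_eq_iff_perm.2 hab⟩

lemma rel_of_perm_of_rel_swap {ρ : Word → Word → Prop} (hρ : IsCongruence ρ)
    (hφ : IsPhiCongruence std ρ) (h12 : ρ [1, 2] [2, 1]) {u v : Word} (huv : u.Perm v) :
    ρ u v := by
  have hswap : ∀ x y : ℕ+, x < y → ρ [x, y] [y, x] := fun x y hxy =>
    hφ.rel_of_std (by rwa [std_pair_of_lt hxy, std_pair_of_gt hxy]) (.swap y x [])
  induction huv with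
  | nil => exact hρ.1.refl []
  | cons z _ ih => exact hρ.2 [z] [z] _ _ (hρ.1.refl _) ih
  | swap x y l =>
    refine hρ.2 [y, x] [x, y] l l ?_ (hρ.1.refl l)
    rcases lt_trichotomy x y with hxy | rfl | hxy
    · exact hρ.1.symm (hswap x y hxy)
    · exact hρ.1.refl _
    · exact hswap y x hxy
  | trans _ _ ih ih' => exact hρ.1.trans ih ih'

lemma restrictTo_eq_pair_of_rel {ρ : Word → Word → Prop} (hφ : IsPhiCongruence std ρ)
    (hI : CompatRestrict ρ) (h12 : ¬ ρ [1, 2] [2, 1]) {I : Set ℕ+} (hII : IsIntervalSet I)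
    {a b : Word} (hab : ρ a b) {x y : ℕ+} (hxy : x < y) (ha : restrictTo I a = [x, y]) :
    restrictTo I b = [x, y] := by
  have hr := hI I hII a b hab
  rw [ha] at hr
  refine (List.perm_pair.1 (hφ.perm_of_rel hr).symm).resolve_right fun hb => h12 ?_
  have := ((hφ _ _).1 hr).1
  rwa [hb, std_pair_of_lt hxy, std_pair_of_gt hxy] at this

lemma reflTransGen_of_reflTransGen_std {R : Word → Word → Prop}
    (hperm : ∀ a b, R a b → a.Perm b)
    (hlift : ∀ a b, R (std a) (std b) → a.Perm b → R a b)
    (hadj : ∀ a b, R a b → ∀ c : ℕ+, restrictTo (Set.Icc c (c + 1)) a = [c, c + 1] →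
      restrictTo (Set.Icc c (c + 1)) b = [c, c + 1])
    {u v : Word} (h : ReflTransGen R (std u) (std v)) (huv : u.Perm v) : ReflTransGen R u v := by
  have key : ∀ w, ReflTransGen R (std u) w →
      w.Perm (std u) ∧ RespectsTies u w ∧ ReflTransGen R u (w.map (dstd u)) := by
    intro w hw
    induction hw with
    | refl => exact ⟨.refl _, respectsTies_std u, by rw [map_dstd_std]⟩
    | tail _ hstep ih =>
      obtain ⟨hw, hwties, hchain⟩ := ih
      have hw' := (hperm _ _ hstep).symm.trans hw
      have hw'ties : RespectsTies u _ := fun c hc hd => hadj _ _ hstep c (hwties c hc hd)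
      refine ⟨hw', hw'ties, hchain.tail (hlift _ _ ?_ ((hperm _ _ hstep).map _))⟩
      rwa [std_map_dstd hw hwties, std_map_dstd hw' hw'ties]
  simpa only [dstd_eq_of_perm huv, map_dstd_std] using (key _ h).2.2

theorem join_of_stdGood_congruences (r s : Word → Word → Prop)
    (hrc : IsCongruence r) (hrφ : IsPhiCongruence std r) (hrI : CompatRestrict r)
    (hsc : IsCongruence s) (hsφ : IsPhiCongruence std s) (hsI : CompatRestrict s) :
    IsCongruence (CongClosure fun u v => r u v ∨ s u v) ∧
      IsPhiCongruence std (CongClosure fun u v => r u v ∨ s u v) ∧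
      CompatRestrict (CongClosure fun u v => r u v ∨ s u v) := by
  have hchain {u v : Word} := congClosure_or_iff_reflTransGen hrc hsc (u := u) (v := v)
  have hperm : ∀ a b, r a b ∨ s a b → a.Perm b := fun _ _ hab =>
    hab.elim hrφ.perm_of_rel hsφ.perm_of_rel
  have hcompat : CompatRestrict (CongClosure fun u v => r u v ∨ s u v) :=
    CongClosure.compatRestrict fun I hI a b => Or.imp (hrI I hI a b) (hsI I hI a b)
  refine ⟨CongClosure.isCongruence _,
    fun u v => ⟨fun h => ⟨?_, ?_⟩, fun ⟨hstd, hev⟩ => ?_⟩, hcompat⟩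
  · refine hchain.2 (ReflTransGen.lift std (fun a b => Or.imp ?_ ?_) u v (hchain.1 h))
    exacts [fun hab => ((hrφ a b).1 hab).1, fun hab => ((hsφ a b).1 hab).1]
  · exact ev_eq_iff_perm.2 (h _ isCongruence_perm hperm)
  have huv := ev_eq_iff_perm.1 hev
  by_cases hr12 : r [1, 2] [2, 1]
  · exact .of_base (.inl (rel_of_perm_of_rel_swap hrc hrφ hr12 huv))
  by_cases hs12 : s [1, 2] [2, 1]
  · exact .of_base (.inr (rel_of_perm_of_rel_swap hsc hsφ hs12 huv))
  refine hchain.2 (reflTransGen_of_reflTransGen_std hperm ?_ ?_ (hchain.1 hstd) huv)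
  · exact fun a b hab hp => hab.imp (hrφ.rel_of_std · hp) (hsφ.rel_of_std · hp)
  · intro a b hab c
    have hc := PNat.lt_add_right c 1
    exact hab.elim (restrictTo_eq_pair_of_rel hrφ hrI hr12 (isIntervalSet_Icc _ _) · hc)
      (restrictTo_eq_pair_of_rel hsφ hsI hs12 (isIntervalSet_Icc _ _) · hc)
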